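/- For all positive integers s and d, T(s+d-1, s) equals the coefficient of x^s in (1 + x + x^2)^{s+d-1} minus the coefficient of x^{s-2} in (1 + x + x^2)^{s+d-1}. -/
import Mathlib


open Polynomial

/-- The Motzkin triangle: T(n,0) = 1, T(n,k) = 0 for k < 0 or k > n,
and T(n,k) = T(n-1,k-2) + T(n-1,k-1) + T(n-1,k) otherwise. -/
def motzkinT : ℕ → ℤ → ℤ
  | 0, k => if k = 0 then 1 else 0
  | n + 1, k =>
    if k < 0 ∨ ((n : ℤ) + 1) < k then 0
    else if k = 0 then 1
    else motzkinT n (k - 2) + motzkinT n (k - 1) + motzkinT n k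

/-- The coefficient of x^k (integer k) in an integer polynomial; 0 for negative k. -/
noncomputable def coeffZ (p : ℤ[X]) (k : ℤ) : ℤ :=
  if k < 0 then 0 else p.coeff k.toNat

-- nat degree bound
lemma ndeg : (1 + X + X ^ 2 : ℤ[X]).natDegree ≤ 2 := by
  compute_degree

lemma vanish (n : ℕ) (k : ℤ) (h : 2 * n < k) :
    coeffZ ((1 + X + X ^ 2 : ℤ[X]) ^ n) k = 0 := by
  have h0 : ¬ k < 0 := by omega
  rw [coeffZ, if_neg h0]
  apply Polynomial.coeff_eq_zero_of_natDegree_lt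
  have := Polynomial.natDegree_pow_le (p := (1 + X + X ^ 2 : ℤ[X])) (n := n)
  have h2 : ((1 + X + X ^ 2 : ℤ[X]) ^ n).natDegree ≤ n * 2 :=
    le_trans this (Nat.mul_le_mul_left n ndeg)
  omega

lemma rec1 (n : ℕ) (m : ℕ) :
    ((1 + X + X ^ 2 : ℤ[X]) ^ (n+1)).coeff m =
      ((1 + X + X ^ 2 : ℤ[X]) ^ n).coeff m
      + (if 1 ≤ m then ((1 + X + X ^ 2 : ℤ[X]) ^ n).coeff (m-1) else 0)
      + (if 2 ≤ m then ((1 + X + X ^ 2 : ℤ[X]) ^ n).coeff (m-2) else 0) := by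
  have : (1 + X + X ^ 2 : ℤ[X]) ^ (n+1)
      = (1 + X + X ^ 2 : ℤ[X]) ^ n * 1 + (1 + X + X ^ 2 : ℤ[X]) ^ n * X ^ 1
        + (1 + X + X ^ 2 : ℤ[X]) ^ n * X ^ 2 := by ring
  rw [this, Polynomial.coeff_add, Polynomial.coeff_add, mul_one,
    Polynomial.coeff_mul_X_pow', Polynomial.coeff_mul_X_pow']

lemma recZ (n : ℕ) (k : ℤ) :
    coeffZ ((1 + X + X ^ 2 : ℤ[X]) ^ (n+1)) k =
      coeffZ ((1 + X + X ^ 2 : ℤ[X]) ^ n) k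
      + coeffZ ((1 + X + X ^ 2 : ℤ[X]) ^ n) (k-1)
      + coeffZ ((1 + X + X ^ 2 : ℤ[X]) ^ n) (k-2) := by
  rcases lt_or_ge k 0 with h | h
  · simp [coeffZ, h, show k - 1 < 0 by omega, show k - 2 < 0 by omega]
  · obtain ⟨m, rfl⟩ := Int.eq_ofNat_of_zero_le h
    have h1 := rec1 n m
    match m with
    | 0 =>
        simp only [show ¬ (1:ℕ) ≤ 0 by omega, show ¬ (2:ℕ) ≤ 0 by omega,
          if_false, add_zero] at h1
        simp [coeffZ, h1]
    | 1 =>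
        simp only [show (1:ℕ) ≤ 1 by omega, show ¬ (2:ℕ) ≤ 1 by omega,
          if_true, if_false, add_zero] at h1
        simp only [coeffZ, show ¬ ((1:ℕ):ℤ) < 0 by omega,
          show ¬ ((1:ℕ):ℤ) - 1 < 0 by omega, show ((1:ℕ):ℤ) - 2 < 0 by omega,
          if_neg, if_pos, if_false, ite_true, ite_false]
        have e1 : (((1:ℕ):ℤ)).toNat = 1 := by omega
        have e2 : (((1:ℕ):ℤ) - 1).toNat = 0 := by omega
        rw [e1, e2]
        simpa using h1
    | (m+2) =>
        simp only [show (1:ℕ) ≤ m + 2 by omega, show (2:ℕ) ≤ m + 2 by omega,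
          if_true, ite_true] at h1
        simp only [coeffZ, if_neg (show ¬ ((m+2:ℕ):ℤ) < 0 by omega),
          if_neg (show ¬ ((m+2:ℕ):ℤ) - 1 < 0 by omega),
          if_neg (show ¬ ((m+2:ℕ):ℤ) - 2 < 0 by omega)]
        have e1 : (((m+2:ℕ):ℤ)).toNat = m + 2 := by omega
        have e2 : (((m+2:ℕ):ℤ) - 1).toNat = m + 1 := by omega
        have e3 : (((m+2:ℕ):ℤ) - 2).toNat = m := by omega
        rw [e1, e2, e3]
        simpa using h1

lemma symZ (n : ℕ) (k : ℤ) :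
    coeffZ ((1 + X + X ^ 2 : ℤ[X]) ^ n) k =
      coeffZ ((1 + X + X ^ 2 : ℤ[X]) ^ n) (2 * n - k) := by
  induction n generalizing k with
  | zero =>
      rcases lt_trichotomy k 0 with h | h | h
      · rw [coeffZ, if_pos h, coeffZ, if_neg (by omega)]
        have : ((2 * (0:ℕ) : ℤ) - k).toNat = (-k).toNat := by omega
        rw [this]
        simp [Polynomial.coeff_one, show ¬ ((-k).toNat = 0) by omega]
      · subst h; norm_num
      · rw [coeffZ, if_neg (by omega), coeffZ, if_pos (by omega)]
        simp [Polynomial.coeff_one, show ¬ (k.toNat = 0) by omega]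
  | succ n ih =>
      rw [recZ, recZ, ih k, ih (k-1), ih (k-2)]
      have e1 : 2 * (n:ℤ) - k = 2 * ((n+1:ℕ):ℤ) - k - 2 := by push_cast; ring
      have e2 : 2 * (n:ℤ) - (k-1) = 2 * ((n+1:ℕ):ℤ) - k - 1 := by push_cast; ring
      have e3 : 2 * (n:ℤ) - (k-2) = 2 * ((n+1:ℕ):ℤ) - k := by push_cast; ring
      rw [e1, e2, e3]; ring

lemma const1 (n : ℕ) : coeffZ ((1 + X + X ^ 2 : ℤ[X]) ^ n) 0 = 1 := by
  rw [coeffZ, if_neg (by omega)]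
  simp [Polynomial.coeff_zero_eq_eval_zero]

lemma main (n : ℕ) (k : ℤ) (h1 : -1 ≤ k) (h2 : k ≤ (n:ℤ) + 1) :
    motzkinT n k = coeffZ ((1 + X + X ^ 2 : ℤ[X]) ^ n) k
      - coeffZ ((1 + X + X ^ 2 : ℤ[X]) ^ n) (k - 2) := by
  induction n generalizing k with
  | zero =>
      interval_cases k <;> simp [motzkinT, coeffZ, Polynomial.coeff_one]
  | succ n ih =>
      rcases lt_trichotomy k 0 with hk | hk | hk
      · have hk1 : k = -1 := by omega
        subst hk1
        rw [show motzkinT (n+1) (-1) = 0 by simp [motzkinT]]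
        rw [coeffZ, if_pos (by omega), coeffZ, if_pos (by omega)]; ring
      · subst hk
        rw [show motzkinT (n+1) 0 = 1 by simp [motzkinT]; omega]
        rw [const1, coeffZ, if_pos (by omega)]; ring
      · rcases eq_or_lt_of_le h2 with he | he
        · -- k = n + 2
          rw [show motzkinT (n+1) k = 0 by
            simp only [motzkinT]; rw [if_pos]; right; omega]
          have hsym := symZ (n+1) k
          rw [show 2 * ((n+1:ℕ):ℤ) - k = k - 2 by omega] at hsym
          rw [hsym]; ring
        · -- 1 ≤ k ≤ n + 1
          rw [show motzkinT (n+1) k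
              = motzkinT n (k-2) + motzkinT n (k-1) + motzkinT n k by
            simp only [motzkinT]
            rw [if_neg (by omega), if_neg (by omega)]]
          rw [ih (k-2) (by omega) (by omega), ih (k-1) (by omega) (by omega),
            ih k (by omega) (by omega), recZ, recZ]
          ring_nf

theorem motzkin_eq_coeff_difference (s d : ℕ) (hs : 0 < s) (hd : 0 < d) :
    motzkinT (s + d - 1) (s : ℤ) =
      coeffZ ((1 + X + X ^ 2 : ℤ[X]) ^ (s + d - 1)) (s : ℤ) -
        coeffZ ((1 + X + X ^ 2 : ℤ[X]) ^ (s + d - 1)) ((s : ℤ) - 2) := by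
  exact main (s + d - 1) s (by omega) (by omega)
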